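/- Let α > 0 and suppose (log p₁₁, log p₁₂) ≺ (log p₂₁, log p₂₂) (majorization of logarithms), all pᵢⱼ ∈ (0,1). Then N_{α,p₁₁} + N_{α,p₁₂} ≤_st N_{α,p₂₁} + N_{α,p₂₂} (independent summands). -/

import Mathlib

open MeasureTheory ProbabilityTheory Real

/-- The negative binomial probability mass function with shape `α` and success probability `p`. -/
noncomputable def negBinomPMF (α p : ℝ) (k : ℕ) : ℝ :=
  Real.Gamma (k + α) / (Nat.factorial k * Real.Gamma α) * p ^ α * (1 - p) ^ k

/-- The negative binomial distribution as a measure on `ℝ` supported on `ℕ`. -/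
noncomputable def negBinomMeasure (α p : ℝ) : Measure ℝ :=
  Measure.sum fun k : ℕ => ENNReal.ofReal (negBinomPMF α p k) • Measure.dirac (k : ℝ)

/-- Convolution order: `ν` equals `μ` convolved with some nonnegative probability measure. -/
def ConvLE (μ ν : Measure ℝ) : Prop :=
  ∃ ρ : Measure ℝ, IsProbabilityMeasure ρ ∧ ρ (Set.Iio 0) = 0 ∧ ν = μ.conv ρ

/-- Usual stochastic order on measures. -/
def StochLE (μ ν : Measure ℝ) : Prop := ∀ t : ℝ, μ (Set.Ici t) ≤ ν (Set.Ici t)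

/-
The two sums have the same product `P = p₁ p₂` of success probabilities, so only the larger
probability `x = max p₁ p₂ ∈ [√P, 1]` varies, and the majorization says `x₁ ≤ x₂`. The sum of
independent `N_{α,x}` and `N_{α,P/x}` has generating function
`P^α (1 - (1-x)s)^(-α) (1 - (1-P/x)s)^(-α)`, so `P(sum < n)` is `P^α` times a partial sum of its
coefficients. Writing `(1 - qs)^(-α) = (1 - qs)(1 - qs)^(-α-1)`, the `x`-derivative of that partial
sum becomes `α (P/x - x)/x` times a partial sum of the coefficients of
`s (1-s) (1 - (1-x)s)^(-α-1) (1 - (1-P/x)s)^(-α-1)`; that partial sum telescopes to a single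
nonnegative coefficient. So `P(sum < n)` decreases in `x` on `[√P, 1]`, and the upper tails
increase.
-/

open Finset PowerSeries
open scoped ENNReal

noncomputable def negBinomCoeff (α : ℝ) (j : ℕ) : ℝ :=
  Gamma (j + α) / (j.factorial * Gamma α)

lemma negBinomCoeff_pos {α : ℝ} (hα : 0 < α) (j : ℕ) : 0 < negBinomCoeff α j := by
  unfold negBinomCoeff
  have := Gamma_pos_of_pos hα
  have := Gamma_pos_of_pos (by positivity : (0 : ℝ) < j + α)
  positivity

lemma negBinomCoeff_zero {α : ℝ} (hα : 0 < α) : negBinomCoeff α 0 = 1 := by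
  simp [negBinomCoeff, (Gamma_pos_of_pos hα).ne']

lemma succ_mul_negBinomCoeff_succ {α : ℝ} (hα : 0 < α) (j : ℕ) :
    (j + 1) * negBinomCoeff α (j + 1) = (j + α) * negBinomCoeff α j := by
  have := (Gamma_pos_of_pos hα).ne'
  unfold negBinomCoeff
  rw [Nat.factorial_succ, Nat.cast_succ, add_right_comm, Gamma_add_one (by positivity)]
  push_cast
  field_simp

lemma mul_negBinomCoeff_add_one {α : ℝ} (hα : 0 < α) (j : ℕ) :
    α * negBinomCoeff (α + 1) j = (j + α) * negBinomCoeff α j := by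
  have := (Gamma_pos_of_pos hα).ne'
  unfold negBinomCoeff
  rw [← add_assoc, Gamma_add_one (by positivity), Gamma_add_one hα.ne']
  field_simp

lemma negBinomCoeff_add_one_succ {α : ℝ} (hα : 0 < α) (j : ℕ) :
    negBinomCoeff (α + 1) (j + 1) = negBinomCoeff (α + 1) j + negBinomCoeff α (j + 1) := by
  have h₁ := mul_negBinomCoeff_add_one hα j
  have h₂ := mul_negBinomCoeff_add_one hα (j + 1)
  have h₃ := succ_mul_negBinomCoeff_succ hα j
  push_cast at h₂
  have : α * (j + 1) ≠ 0 := by positivity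
  apply mul_left_cancel₀ this
  linear_combination (j + 1 : ℝ) * h₂ - (j + 1 : ℝ) * h₁ + (j + 1 : ℝ) * h₃

lemma negBinomCoeff_eq_choose {α : ℝ} (hα : 0 < α) (j : ℕ) :
    negBinomCoeff α j = Ring.choose (α + j - 1) j := by
  have hΓ : Gamma (j + α) = Gamma α * (ascPochhammer ℝ j).eval α := by
    induction j with
    | zero => simp
    | succ j ih =>
      rw [ascPochhammer_succ_eval, Nat.cast_succ, add_right_comm, Gamma_add_one (by positivity),
        ih]
      ring
  have hfact := Ring.factorial_nsmul_multichoose_eq_ascPochhammer α j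
  rw [Polynomial.ascPochhammer_smeval_eq_eval, nsmul_eq_mul] at hfact
  have := (Gamma_pos_of_pos hα).ne'
  rw [← Ring.multichoose_eq, negBinomCoeff, hΓ, ← hfact]
  field_simp

lemma hasSum_negBinomCoeff_mul_pow {α q : ℝ} (hα : 0 < α) (hq : |q| < 1) :
    HasSum (fun j => negBinomCoeff α j * q ^ j) (1 / (1 - q) ^ α) := by
  have h := (one_div_one_sub_rpow_hasFPowerSeriesOnBall_zero α).hasSum
    (y := q) (by simpa [edist_dist] using hq)
  simp only [FormalMultilinearSeries.ofScalars_apply_eq, smul_eq_mul, zero_add] at h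
  simpa only [negBinomCoeff_eq_choose hα] using h

theorem PowerSeries.hasDerivAt_coeff_mul {𝕜 : Type*} [NontriviallyNormedField 𝕜]
    {f g : 𝕜 → 𝕜⟦X⟧} {f' g' : 𝕜⟦X⟧} {x : 𝕜}
    (hf : ∀ n, HasDerivAt (fun y => coeff n (f y)) (coeff n f') x)
    (hg : ∀ n, HasDerivAt (fun y => coeff n (g y)) (coeff n g') x) (n : ℕ) :
    HasDerivAt (fun y => coeff n (f y * g y)) (coeff n (f' * g x + f x * g')) x := by
  simp only [coeff_mul, map_add, ← sum_add_distrib]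
  exact HasDerivAt.fun_sum fun p _ => (hf p.1).mul (hg p.2)

theorem PowerSeries.sum_range_succ_coeff_mul_one_sub_X {R : Type*} [Ring R] (F : R⟦X⟧) (n : ℕ) :
    ∑ m ∈ range (n + 1), coeff m (F * (1 - X)) = coeff n F := by
  induction n with
  | zero => simp
  | succ n ih => rw [sum_range_succ, ih, mul_sub, mul_one, map_sub, coeff_succ_mul_X]; abel

theorem PowerSeries.coeff_mul_nonneg {R : Type*} [CommSemiring R] [PartialOrder R]
    [IsOrderedRing R] {f g : R⟦X⟧} (hf : ∀ n, 0 ≤ coeff n f) (hg : ∀ n, 0 ≤ coeff n g) (n : ℕ) :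
    0 ≤ coeff n (f * g) := by
  rw [coeff_mul]
  exact sum_nonneg fun p _ => mul_nonneg (hf p.1) (hg p.2)

/-- The power series of `(1 - q X) ^ (-α)`. -/
noncomputable def negBinomSeries (α q : ℝ) : ℝ⟦X⟧ :=
  mk fun j => negBinomCoeff α j * q ^ j

lemma coeff_negBinomSeries_nonneg {α q : ℝ} (hα : 0 < α) (hq : 0 ≤ q) (j : ℕ) :
    0 ≤ coeff j (negBinomSeries α q) := by
  rw [negBinomSeries, coeff_mk]
  exact mul_nonneg (negBinomCoeff_pos hα j).le (pow_nonneg hq j)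

lemma negBinomSeries_eq_one_sub_mul {α : ℝ} (hα : 0 < α) (q : ℝ) :
    negBinomSeries α q = (1 - C q * X) * negBinomSeries (α + 1) q := by
  ext (_ | j)
  · simp [negBinomSeries, negBinomCoeff_zero hα, negBinomCoeff_zero (by linarith : 0 < α + 1)]
  · rw [sub_mul, one_mul, map_sub, mul_assoc, coeff_C_mul, coeff_succ_X_mul]
    simp only [negBinomSeries, coeff_mk, negBinomCoeff_add_one_succ hα]
    ring

lemma hasDerivAt_coeff_negBinomSeries {α : ℝ} (hα : 0 < α) (q : ℝ) (j : ℕ) :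
    HasDerivAt (fun q => coeff j (negBinomSeries α q))
      (coeff j (C α * X * negBinomSeries (α + 1) q)) q := by
  rcases j with _ | j
  · simpa [mul_assoc, negBinomSeries] using hasDerivAt_const q (negBinomCoeff α 0)
  · rw [mul_assoc, coeff_C_mul, coeff_succ_X_mul]
    simp only [negBinomSeries, coeff_mk]
    refine ((hasDerivAt_pow (j + 1) q).const_mul (negBinomCoeff α (j + 1))).congr_deriv ?_
    push_cast
    linear_combination
      q ^ j * succ_mul_negBinomCoeff_succ hα j - q ^ j * mul_negBinomCoeff_add_one hα j

/-- Up to the factor `P ^ α`, the probability that `N_{α,x} + N_{α,P/x} < n` for independent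
summands. -/
noncomputable def negBinomHead (α P : ℝ) (n : ℕ) (x : ℝ) : ℝ :=
  ∑ m ∈ range n, coeff m (negBinomSeries α (1 - x) * negBinomSeries α (1 - P / x))

lemma hasDerivAt_negBinomHead {α : ℝ} (hα : 0 < α) (P : ℝ) (n : ℕ) {x : ℝ} (hx : x ≠ 0) :
    HasDerivAt (negBinomHead α P n)
      (α * (P / x - x) / x * ∑ m ∈ range n, coeff m (X * negBinomSeries (α + 1) (1 - x) *
        negBinomSeries (α + 1) (1 - P / x) * (1 - X))) x := by
  set B₁ := negBinomSeries (α + 1) (1 - x)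
  set B₂ := negBinomSeries (α + 1) (1 - P / x)
  have hf : ∀ j, HasDerivAt (fun y => coeff j (negBinomSeries α (1 - y)))
      (coeff j (-(C α * X * B₁))) x := fun j => by
    refine ((hasDerivAt_coeff_negBinomSeries hα (1 - x) j).comp x
      ((hasDerivAt_id x).const_sub 1)).congr_deriv ?_
    simp [B₁]
  have hg : ∀ j, HasDerivAt (fun y => coeff j (negBinomSeries α (1 - P / y)))
      (coeff j (C (α * (P / x ^ 2)) * X * B₂)) x := fun j => by
    have := (hasDerivAt_coeff_negBinomSeries hα (1 - P / x) j).comp x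
      (((hasDerivAt_inv hx).const_mul P).const_sub 1)
    refine this.congr_deriv ?_
    simp only [mul_assoc, coeff_C_mul, B₂, div_eq_mul_inv]
    ring
  have hseries : -(C α * X * B₁) * negBinomSeries α (1 - P / x)
      + negBinomSeries α (1 - x) * (C (α * (P / x ^ 2)) * X * B₂)
      = C (α * (P / x - x) / x) * (X * B₁ * B₂ * (1 - X)) := by
    rw [negBinomSeries_eq_one_sub_mul hα (1 - x), negBinomSeries_eq_one_sub_mul hα (1 - P / x)]
    have h₁ : C (α * (P / x ^ 2)) = C α * C (P / x ^ 2) := map_mul _ _ _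
    have h₂ : C (α * (P / x - x) / x) = C α * (C (P / x ^ 2) - 1) := by
      rw [← map_one C, ← map_sub, ← map_mul]; congr 1; field_simp
    have h₃ : C (P / x ^ 2) * C x = C (P / x) := by
      rw [← map_mul]; congr 1; field_simp
    rw [h₁, h₂, map_sub, map_sub, map_one]
    linear_combination C α * X * B₁ * B₂ * X * h₃
  unfold negBinomHead
  refine (HasDerivAt.fun_sum fun m _ => hasDerivAt_coeff_mul hf hg m).congr_deriv ?_
  simp only [hseries, coeff_C_mul, mul_sum]

lemma negBinomHead_antitoneOn {α P : ℝ} (hα : 0 < α) (hP : 0 < P) (n : ℕ) :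
    AntitoneOn (negBinomHead α P n) (Set.Icc √P 1) := by
  have hsqrt : 0 < √P := sqrt_pos.2 hP
  have hcont : ContinuousOn (negBinomHead α P n) (Set.Icc √P 1) := fun x hx =>
    (hasDerivAt_negBinomHead hα P n (hsqrt.trans_le hx.1).ne').continuousAt.continuousWithinAt
  refine antitoneOn_of_hasDerivWithinAt_nonpos (convex_Icc _ _) hcont
    (fun x hx => (hasDerivAt_negBinomHead hα P n ?_).hasDerivWithinAt) fun x hx => ?_
  · rw [interior_Icc] at hx
    exact (hsqrt.trans hx.1).ne'
  rw [interior_Icc] at hx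
  obtain ⟨hlo, hhi⟩ := hx
  have hx₀ : 0 < x := hsqrt.trans hlo
  have hPx : P / x ≤ x := by
    rw [div_le_iff₀ hx₀]
    nlinarith [sq_sqrt hP.le]
  have hsum : 0 ≤ ∑ m ∈ range n, coeff m (X * negBinomSeries (α + 1) (1 - x) *
      negBinomSeries (α + 1) (1 - P / x) * (1 - X)) := by
    rcases n with _ | n
    · simp
    rw [sum_range_succ_coeff_mul_one_sub_X]
    refine coeff_mul_nonneg (coeff_mul_nonneg (fun k => ?_) ?_) ?_ n
    · rw [coeff_X]; split_ifs <;> norm_num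
    · exact coeff_negBinomSeries_nonneg (by linarith) (by linarith)
    · exact coeff_negBinomSeries_nonneg (by linarith) (by linarith)
  have hcoef : α * (P / x - x) / x ≤ 0 :=
    div_nonpos_of_nonpos_of_nonneg (mul_nonpos_of_nonneg_of_nonpos hα.le (by linarith)) hx₀.le
  exact mul_nonpos_of_nonpos_of_nonneg hcoef hsum

noncomputable def natMeasure (w : ℕ → ℝ≥0∞) : Measure ℝ :=
  Measure.sum fun k => w k • Measure.dirac (k : ℝ)

instance sFinite_natMeasure (w : ℕ → ℝ≥0∞) : SFinite (natMeasure w) := by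
  unfold natMeasure
  infer_instance

lemma lintegral_natMeasure (w : ℕ → ℝ≥0∞) (f : ℝ → ℝ≥0∞) :
    ∫⁻ y, f y ∂natMeasure w = ∑' k, w k * f k := by
  simp [natMeasure, lintegral_sum_measure, lintegral_smul_measure]

lemma natMeasure_apply (w : ℕ → ℝ≥0∞) {s : Set ℝ} (hs : MeasurableSet s) :
    natMeasure w s = ∑' k, w k * s.indicator 1 (k : ℝ) := by
  rw [← lintegral_indicator_one hs, lintegral_natMeasure]

lemma natMeasure_conv (a b : ℕ → ℝ≥0∞) :
    (natMeasure a).conv (natMeasure b) =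
      natMeasure fun m => ∑ p ∈ antidiagonal m, a p.1 * b p.2 := by
  ext s hs
  rw [← lintegral_indicator_one hs, Measure.lintegral_conv (measurable_one.indicator hs),
    lintegral_natMeasure, natMeasure_apply _ hs]
  simp_rw [lintegral_natMeasure, ← ENNReal.tsum_mul_left, ← mul_assoc]
  rw [← ENNReal.tsum_prod' (f := fun p : ℕ × ℕ => a p.1 * b p.2 * s.indicator 1 ((p.1 : ℝ) + p.2)),
    ← HasAntidiagonal.sigmaAntidiagonalEquivProd.tsum_eq,
    ENNReal.tsum_sigma']
  refine tsum_congr fun m => ?_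
  rw [tsum_fintype, sum_mul, ← sum_coe_sort (antidiagonal m)]
  refine sum_congr rfl fun p _ => ?_
  have hp : (p.1.1 : ℝ) + p.1.2 = m := by exact_mod_cast mem_antidiagonal.1 p.2
  simp [hp]

lemma natMeasure_Ici (w : ℕ → ℝ≥0∞) (t : ℝ) :
    natMeasure w (Set.Ici t) = ∑' k, w (k + ⌈t⌉₊) := by
  have hind : ∀ k : ℕ, w k * (Set.Ici t).indicator 1 (k : ℝ) = if ⌈t⌉₊ ≤ k then w k else 0 := by
    intro k
    simp [Set.indicator, Nat.ceil_le]
  rw [natMeasure_apply w measurableSet_Ici, ← ENNReal.summable.sum_add_tsum_nat_add'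
    (f := fun k : ℕ => w k * (Set.Ici t).indicator 1 (k : ℝ)) (k := ⌈t⌉₊)]
  simp only [hind, le_add_iff_nonneg_left, zero_le, if_true]
  rw [sum_eq_zero fun k hk => if_neg (not_le.2 (mem_range.1 hk)), zero_add]

lemma stochLE_natMeasure_of_sum_range_le {a b : ℕ → ℝ≥0∞} (hsum : ∑' k, a k = ∑' k, b k)
    (hfin : ∑' k, a k ≠ ∞) (hhead : ∀ n, ∑ k ∈ range n, b k ≤ ∑ k ∈ range n, a k) :
    StochLE (natMeasure a) (natMeasure b) := by
  intro t
  rw [natMeasure_Ici, natMeasure_Ici]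
  have ha := ENNReal.summable.sum_add_tsum_nat_add' (f := a) (k := ⌈t⌉₊)
  have hb := ENNReal.summable.sum_add_tsum_nat_add' (f := b) (k := ⌈t⌉₊)
  have hfin' : ∑ k ∈ range ⌈t⌉₊, a k ≠ ∞ := ne_top_of_le_ne_top hfin (ha ▸ le_self_add)
  refine (ENNReal.add_le_add_iff_left hfin').1 ?_
  calc ∑ k ∈ range ⌈t⌉₊, a k + ∑' k, a (k + ⌈t⌉₊)
      = ∑ k ∈ range ⌈t⌉₊, b k + ∑' k, b (k + ⌈t⌉₊) := by rw [ha, hb, hsum]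
    _ ≤ ∑ k ∈ range ⌈t⌉₊, a k + ∑' k, b (k + ⌈t⌉₊) := add_le_add_left (hhead _) _

lemma negBinomPMF_eq (α p : ℝ) (k : ℕ) :
    negBinomPMF α p k = p ^ α * coeff k (negBinomSeries α (1 - p)) := by
  rw [negBinomPMF, negBinomSeries, coeff_mk, negBinomCoeff]
  ring

lemma negBinomPMF_nonneg {α p : ℝ} (hα : 0 < α) (hp : p ∈ Set.Ioo (0 : ℝ) 1) (k : ℕ) :
    0 ≤ negBinomPMF α p k := by
  rw [negBinomPMF_eq]
  exact mul_nonneg (rpow_nonneg hp.1.le α) (coeff_negBinomSeries_nonneg hα (by linarith [hp.2]) k)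

lemma hasSum_negBinomPMF {α p : ℝ} (hα : 0 < α) (hp : p ∈ Set.Ioo (0 : ℝ) 1) :
    HasSum (fun k => negBinomPMF α p k) 1 := by
  have h := (hasSum_negBinomCoeff_mul_pow hα (q := 1 - p)
    (abs_lt.2 ⟨by linarith [hp.2], by linarith [hp.1]⟩)).mul_left (p ^ α)
  rw [sub_sub_cancel, mul_one_div_cancel (rpow_pos_of_pos hp.1 α).ne'] at h
  simpa only [negBinomPMF_eq, negBinomSeries, coeff_mk] using h

lemma negBinomMeasure_eq_natMeasure (α p : ℝ) :
    negBinomMeasure α p = natMeasure fun k => ENNReal.ofReal (negBinomPMF α p k) := rfl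

lemma isProbabilityMeasure_negBinomMeasure {α p : ℝ} (hα : 0 < α) (hp : p ∈ Set.Ioo (0 : ℝ) 1) :
    IsProbabilityMeasure (negBinomMeasure α p) := by
  constructor
  rw [negBinomMeasure_eq_natMeasure, natMeasure_apply _ MeasurableSet.univ]
  simp only [Set.indicator_univ, Pi.one_apply, mul_one]
  have h := hasSum_negBinomPMF hα hp
  rw [← ENNReal.ofReal_tsum_of_nonneg (negBinomPMF_nonneg hα hp) h.summable, h.tsum_eq,
    ENNReal.ofReal_one]

lemma tsum_sum_antidiagonal_negBinomPMF_eq_one {α p₁ p₂ : ℝ} (hα : 0 < α)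
    (h₁ : p₁ ∈ Set.Ioo (0 : ℝ) 1) (h₂ : p₂ ∈ Set.Ioo (0 : ℝ) 1) :
    ∑' m, ∑ p ∈ antidiagonal m,
      ENNReal.ofReal (negBinomPMF α p₁ p.1) * ENNReal.ofReal (negBinomPMF α p₂ p.2) = 1 := by
  have := isProbabilityMeasure_negBinomMeasure hα h₁
  have := isProbabilityMeasure_negBinomMeasure hα h₂
  rw [← measure_univ (μ := (negBinomMeasure α p₁).conv (negBinomMeasure α p₂)),
    negBinomMeasure_eq_natMeasure, negBinomMeasure_eq_natMeasure, natMeasure_conv,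
    natMeasure_apply _ MeasurableSet.univ]
  simp

lemma negBinomSeries_mul_eq_max {α p₁ p₂ : ℝ} (h : max p₁ p₂ ≠ 0) :
    negBinomSeries α (1 - p₁) * negBinomSeries α (1 - p₂) =
      negBinomSeries α (1 - max p₁ p₂) * negBinomSeries α (1 - p₁ * p₂ / max p₁ p₂) := by
  rw [← max_mul_min p₁ p₂, mul_div_cancel_left₀ _ h]
  rcases le_total p₁ p₂ with h | h
  · simp [h, mul_comm]
  · simp [h]

lemma sum_range_sum_antidiagonal_negBinomPMF_eq_negBinomHead {α p₁ p₂ : ℝ} (hα : 0 < α)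
    (h₁ : p₁ ∈ Set.Ioo (0 : ℝ) 1) (h₂ : p₂ ∈ Set.Ioo (0 : ℝ) 1) (n : ℕ) :
    ∑ m ∈ range n, ∑ p ∈ antidiagonal m,
      ENNReal.ofReal (negBinomPMF α p₁ p.1) * ENNReal.ofReal (negBinomPMF α p₂ p.2) =
      ENNReal.ofReal ((p₁ * p₂) ^ α * negBinomHead α (p₁ * p₂) n (max p₁ p₂)) := by
  have hterm : ∀ p : ℕ × ℕ, negBinomPMF α p₁ p.1 * negBinomPMF α p₂ p.2 = (p₁ * p₂) ^ α *
      (coeff p.1 (negBinomSeries α (1 - p₁)) * coeff p.2 (negBinomSeries α (1 - p₂))) := by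
    intro p
    rw [negBinomPMF_eq, negBinomPMF_eq, mul_rpow h₁.1.le h₂.1.le]
    ring
  have hterm_nonneg : ∀ p : ℕ × ℕ, 0 ≤ (p₁ * p₂) ^ α *
      (coeff p.1 (negBinomSeries α (1 - p₁)) * coeff p.2 (negBinomSeries α (1 - p₂))) :=
    fun p => hterm p ▸ mul_nonneg (negBinomPMF_nonneg hα h₁ _) (negBinomPMF_nonneg hα h₂ _)
  simp_rw [← ENNReal.ofReal_mul (negBinomPMF_nonneg hα h₁ _), hterm, negBinomHead,
    ← negBinomSeries_mul_eq_max (lt_max_of_lt_left h₁.1).ne', mul_sum, coeff_mul, mul_sum]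
  rw [ENNReal.ofReal_sum_of_nonneg fun m _ => sum_nonneg fun p _ => hterm_nonneg p]
  exact sum_congr rfl fun m _ => (ENNReal.ofReal_sum_of_nonneg fun p _ => hterm_nonneg p).symm

lemma max_mem_Icc_sqrt_mul {a b : ℝ} (ha : a ∈ Set.Icc (0 : ℝ) 1) (hb : b ∈ Set.Icc (0 : ℝ) 1) :
    max a b ∈ Set.Icc √(a * b) 1 :=
  ⟨sqrt_le_iff.2 ⟨le_max_of_le_left ha.1,
    by nlinarith [le_max_left a b, le_max_right a b, ha.1, hb.1]⟩, max_le ha.2 hb.2⟩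

/-- Usual stochastic order for negative binomial convolutions under majorization of the
logarithms of the success probabilities. -/
theorem negBinom_log_majorize_st_order (α p₁₁ p₁₂ p₂₁ p₂₂ : ℝ) (hα : 0 < α)
    (h11 : p₁₁ ∈ Set.Ioo (0:ℝ) 1) (h12 : p₁₂ ∈ Set.Ioo (0:ℝ) 1)
    (h21 : p₂₁ ∈ Set.Ioo (0:ℝ) 1) (h22 : p₂₂ ∈ Set.Ioo (0:ℝ) 1)
    (hsum : Real.log p₁₁ + Real.log p₁₂ = Real.log p₂₁ + Real.log p₂₂)
    (hmax : max (Real.log p₁₁) (Real.log p₁₂) ≤ max (Real.log p₂₁) (Real.log p₂₂)) :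
    StochLE ((negBinomMeasure α p₁₁).conv (negBinomMeasure α p₁₂))
      ((negBinomMeasure α p₂₁).conv (negBinomMeasure α p₂₂)) := by
  have hP : p₂₁ * p₂₂ = p₁₁ * p₁₂ := by
    rw [← exp_log (mul_pos h11.1 h12.1), ← exp_log (mul_pos h21.1 h22.1),
      log_mul h11.1.ne' h12.1.ne', log_mul h21.1.ne' h22.1.ne', hsum]
  have hx : max p₁₁ p₁₂ ≤ max p₂₁ p₂₂ := by
    rw [← exp_log h11.1, ← exp_log h12.1, ← exp_log h21.1, ← exp_log h22.1,
      ← exp_monotone.map_max, ← exp_monotone.map_max]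
    exact exp_le_exp.2 hmax
  simp only [negBinomMeasure_eq_natMeasure, natMeasure_conv]
  refine stochLE_natMeasure_of_sum_range_le ?_ ?_ fun n => ?_
  · rw [tsum_sum_antidiagonal_negBinomPMF_eq_one hα h11 h12,
      tsum_sum_antidiagonal_negBinomPMF_eq_one hα h21 h22]
  · exact (tsum_sum_antidiagonal_negBinomPMF_eq_one hα h11 h12).symm ▸ ENNReal.one_ne_top
  rw [sum_range_sum_antidiagonal_negBinomPMF_eq_negBinomHead hα h11 h12,
    sum_range_sum_antidiagonal_negBinomPMF_eq_negBinomHead hα h21 h22, hP]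
  have hmem : ∀ {a b : ℝ}, a ∈ Set.Ioo (0 : ℝ) 1 → b ∈ Set.Ioo (0 : ℝ) 1 →
      max a b ∈ Set.Icc √(a * b) 1 := fun ha hb =>
    max_mem_Icc_sqrt_mul (Set.Ioo_subset_Icc_self ha) (Set.Ioo_subset_Icc_self hb)
  have hP₀ : 0 < p₁₁ * p₁₂ := mul_pos h11.1 h12.1
  gcongr
  exact negBinomHead_antitoneOn hα hP₀ n (hmem h11 h12) (hP ▸ hmem h21 h22) hx
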